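/- arXiv:1511.01755 — 4 statements merged into one kernel-verified Lean document; each statement's English description precedes it below -/
import Mathlib

section
/- Let K/ℚ be Galois with Galois group G of order n, let η ∈ K^× have multiplicatively independent conjugates, let H = ⟨s⟩ be a cyclic subgroup of G generated by an element s, and let f(X) ∈ ℤ[X] be a polynomial such that the evaluation f(s) is nonzero in the group ring ℤ[H]. Then there exists a bound B such that for every prime number p > B that is unramified in K/ℚ and prime to η, for every prime ideal 𝔭 of K above p whose Frobenius equals s, and for every root of unity ζ ∈ μ(K), one has η^{f(p)} ≢ ζ (mod 𝔭). -/
/-!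
Put `α = η ^ f(s) = ∏ (sⁱ η) ^ cᵢ` where `f = ∑ cᵢ Xⁱ`, and let `M = #μ(K)`. Since `f(s) ≠ 0`,
the independence of the conjugates of `η` gives `α ^ M ≠ 1`; write `α ^ M - 1 = g / d` with
`g ≠ 0` integral. If `s` is the Frobenius of `𝔭 ∣ p`, then `sⁱ η ≡ η ^ pⁱ (mod 𝔭)`, hence
`α ≡ η ^ f(p) (mod 𝔭)`. A congruence `η ^ f(p) ≡ ζ` therefore forces `α ^ M ≡ ζ ^ M = 1`, i.e.
`g ∈ 𝔭`, and then `p ∣ N(g)`, which is impossible once `p > |N(g)|`.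
-/

open NumberField Polynomial

/-- `x ≡ y (mod I)` for `x : K`, `y : 𝓞 K`: `x` can be written as a fraction `a/b`
with `b` invertible mod `I` and `a ≡ y·b (mod I)`. -/
def CongMod (K : Type) [Field K] [NumberField K] (I : Ideal (𝓞 K)) (x : K) (y : 𝓞 K) : Prop :=
  ∃ a b : 𝓞 K, IsUnit (Ideal.Quotient.mk I b) ∧
    algebraMap (𝓞 K) K a = x * algebraMap (𝓞 K) K b ∧
    Ideal.Quotient.mk I a = Ideal.Quotient.mk I (y * b)

/-- `η ∈ K^×` is a unit at every prime of `K` above `p`: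
it is a quotient of two integers of `K` that are invertible modulo `p`. -/
def PrimeTo (K : Type) [Field K] [NumberField K] (p : ℕ) (η : K) : Prop :=
  ∃ a b : 𝓞 K,
    IsUnit (Ideal.Quotient.mk (Ideal.span {(p : 𝓞 K)}) a) ∧
    IsUnit (Ideal.Quotient.mk (Ideal.span {(p : 𝓞 K)}) b) ∧
    algebraMap (𝓞 K) K a = η * algebraMap (𝓞 K) K b

/-- The set of integers `k ≥ 1` with `η^k ≡ 1 (mod I)`; its least element
is the order of `η` modulo `I`. -/
def OrderSet (K : Type) [Field K] [NumberField K] (I : Ideal (𝓞 K)) (η : K) : Set ℕ :=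
  {k : ℕ | 0 < k ∧ CongMod K I (η ^ k) 1}

/-- `s` is the Frobenius of `𝔭` over `p`: `s x ≡ x^p (mod 𝔭)` for every integer `x` of `K`. -/
def IsFrob (K : Type) [Field K] [NumberField K] (p : ℕ)
    (𝔭 : Ideal (𝓞 K)) (s : K ≃ₐ[ℚ] K) : Prop :=
  ∀ x : 𝓞 K, galRestrict ℤ ℚ K (𝓞 K) s x - x ^ p ∈ 𝔭

theorem MonoidAlgebra.coeff_aeval_of {R G : Type*} [CommRing R] [Monoid G] [DecidableEq G]
    (g : G) (f : R[X]) (h : G) :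
    (aeval (of R G g) f).coeff h = ∑ i ∈ f.support with g ^ i = h, f.coeff i := by
  rw [aeval_def, eval₂_eq_sum, Polynomial.sum_def, coeff_sum, Finsupp.finsetSum_apply,
    Finset.sum_filter]
  refine Finset.sum_congr rfl fun i _ ↦ ?_
  simp [Algebra.algebraMap_eq_smul_one, Finsupp.single_apply]

theorem prod_zpow_coeff_aeval_of {F K : Type*} [Field F] [Field K] [Algebra F K]
    [Fintype (K ≃ₐ[F] K)] {η : K} (hη0 : η ≠ 0) (s : K ≃ₐ[F] K) (f : ℤ[X]) :
    ∏ σ : K ≃ₐ[F] K, σ η ^ (aeval (MonoidAlgebra.of ℤ _ s) f).coeff σ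
      = ∏ i ∈ f.support, (s ^ i) η ^ f.coeff i := by
  classical
  have hsum (σ : K ≃ₐ[F] K) (t : Finset ℕ) (c : ℕ → ℤ) :
      σ η ^ (∑ i ∈ t, c i) = ∏ i ∈ t, σ η ^ c i := by
    have hσ : σ η ≠ 0 := by simpa using hη0
    induction t using Finset.cons_induction <;> simp [zpow_add₀ hσ, *]
  simp_rw [MonoidAlgebra.coeff_aeval_of, hsum]
  symm
  rw [← Finset.prod_fiberwise_of_maps_to (fun i _ ↦ Finset.mem_univ (s ^ i))]
  exact Finset.prod_congr rfl fun σ _ ↦ Finset.prod_congr rfl fun i hi ↦ by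
    rw [(Finset.mem_filter.mp hi).2]

theorem prod_conj_zpow_pow_ne_one {F K : Type*} [Field F] [Field K] [Algebra F K]
    [Fintype (K ≃ₐ[F] K)] {η : K} (hη0 : η ≠ 0)
    (hind : ∀ e : (K ≃ₐ[F] K) → ℤ, ∏ σ : K ≃ₐ[F] K, σ η ^ e σ = 1 → ∀ σ, e σ = 0)
    {s : K ≃ₐ[F] K} {f : ℤ[X]} (hf : aeval (MonoidAlgebra.of ℤ _ s) f ≠ 0) {M : ℕ}
    (hM : M ≠ 0) :
    (∏ i ∈ f.support, (s ^ i) η ^ f.coeff i) ^ M ≠ 1 := by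
  intro h1
  refine hf (MonoidAlgebra.ext (Finsupp.ext fun σ ↦ ?_))
  have := hind (fun σ ↦ M * (aeval (MonoidAlgebra.of ℤ _ s) f).coeff σ) ?_ σ
  · simpa [hM] using this
  · simp_rw [zpow_mul', zpow_natCast, Finset.prod_pow, prod_zpow_coeff_aeval_of hη0, h1]

/-- `x` is integral at `I` with residue `u`. -/
def ReducesTo {R K : Type*} [CommRing R] [Field K] [Algebra R K] (I : Ideal R) (x : K)
    (u : R ⧸ I) : Prop :=
  ∃ a b : R, IsUnit (Ideal.Quotient.mk I b) ∧ algebraMap R K a = x * algebraMap R K b ∧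
    Ideal.Quotient.mk I a = u * Ideal.Quotient.mk I b

namespace ReducesTo

variable {R K : Type*} [CommRing R] [Field K] [Algebra R K] {I : Ideal R} {x y : K}
  {u v : R ⧸ I}

theorem algebraMap_self (r : R) : ReducesTo I (algebraMap R K r) (Ideal.Quotient.mk I r) :=
  ⟨r, 1, by simp, by simp, by simp⟩

theorem one : ReducesTo I (1 : K) 1 := by
  simpa using algebraMap_self (K := K) (I := I) 1

theorem mul (hx : ReducesTo I x u) (hy : ReducesTo I y v) : ReducesTo I (x * y) (u * v) := by
  obtain ⟨a, b, hb, hab, hu⟩ := hx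
  obtain ⟨a', b', hb', hab', hv⟩ := hy
  refine ⟨a * a', b * b', by simpa using hb.mul hb', ?_, ?_⟩
  · rw [map_mul, map_mul, hab, hab']; ring
  · rw [map_mul, map_mul, hu, hv]; ring

theorem sub (hx : ReducesTo I x u) (hy : ReducesTo I y v) : ReducesTo I (x - y) (u - v) := by
  obtain ⟨a, b, hb, hab, hu⟩ := hx
  obtain ⟨a', b', hb', hab', hv⟩ := hy
  refine ⟨a * b' - a' * b, b * b', by simpa using hb.mul hb', ?_, ?_⟩
  · simp only [map_sub, map_mul, hab, hab']; ring
  · simp only [map_sub, map_mul, hu, hv]; ring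

theorem pow (hx : ReducesTo I x u) (k : ℕ) : ReducesTo I (x ^ k) (u ^ k) := by
  induction k with
  | zero => simpa using one
  | succ k ih => simpa only [pow_succ] using ih.mul hx

theorem prod {ι : Type*} (t : Finset ι) {x : ι → K} {u : ι → R ⧸ I}
    (h : ∀ i ∈ t, ReducesTo I (x i) (u i)) : ReducesTo I (∏ i ∈ t, x i) (∏ i ∈ t, u i) := by
  classical
  induction t using Finset.induction_on with
  | empty => simpa using one
  | insert i t hi ih =>
    simp only [Finset.prod_insert hi]
    exact (h i (t.mem_insert_self i)).mul (ih fun j hj ↦ h j (Finset.mem_insert_of_mem hj))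

variable [IsFractionRing R K]

theorem unique (hu : ReducesTo I x u) (hv : ReducesTo I x v) : u = v := by
  obtain ⟨a, b, hb, hab, hu⟩ := hu
  obtain ⟨a', b', hb', hab', hv⟩ := hv
  have hcross : a * b' = a' * b := IsFractionRing.injective R K <| by
    rw [map_mul, map_mul, hab, hab']; ring
  have := congrArg (Ideal.Quotient.mk I) hcross
  rw [map_mul, map_mul, hu, hv] at this
  exact (hb.mul hb').mul_left_cancel (by linear_combination this)

theorem mem_of_algebraMap_eq_mul (hx : ReducesTo I x 0) {g d : R}
    (h : algebraMap R K g = x * algebraMap R K d) : g ∈ I := by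
  have := (algebraMap_self g).unique (h ▸ hx.mul (algebraMap_self d))
  rwa [zero_mul, Ideal.Quotient.eq_zero_iff_mem] at this

theorem inv (hI : I ≠ ⊤) {w : (R ⧸ I)ˣ} (hx : ReducesTo I x w) :
    ReducesTo I x⁻¹ ↑w⁻¹ := by
  have : Nontrivial (R ⧸ I) := Ideal.Quotient.nontrivial_iff.mpr hI
  obtain ⟨a, b, hb, hab, hw⟩ := hx
  have ha : IsUnit (Ideal.Quotient.mk I a) := hw ▸ w.isUnit.mul hb
  have hx0 : x ≠ 0 := by
    rintro rfl
    rw [zero_mul, IsFractionRing.to_map_eq_zero_iff] at hab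
    exact not_isUnit_zero (hab ▸ ha)
  refine ⟨b, a, ha, by rw [hab]; field_simp, ?_⟩
  rw [hw, ← mul_assoc, Units.inv_mul, one_mul]

theorem zpow (hI : I ≠ ⊤) {w : (R ⧸ I)ˣ} (hx : ReducesTo I x w) (z : ℤ) :
    ReducesTo I (x ^ z) ↑(w ^ z) := by
  cases z with
  | ofNat k => simpa using hx.pow k
  | negSucc k => simpa using inv hI (w := w ^ (k + 1)) (by simpa using hx.pow (k + 1))

end ReducesTo

theorem Nat.Prime.le_absNorm_of_le {S : Type*} [CommRing S] [IsDedekindDomain S]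
    [Module.Free ℤ S] [Module.Finite ℤ S] {P : Ideal S} [P.IsPrime] {p : ℕ} (hp : p.Prime)
    (hpP : (p : S) ∈ P) {I : Ideal S} (hI : I ≤ P) (hI0 : I ≠ ⊥) : p ≤ Ideal.absNorm I := by
  have : CharP (S ⧸ P) p :=
    (CharP.charP_iff_prime_eq_zero hp).mpr (Ideal.Quotient.eq_zero_iff_mem.mpr hpP)
  have hdvd : p ∣ Ideal.absNorm I := by
    rw [← CharP.cast_eq_zero_iff (S ⧸ P), ← map_natCast (Ideal.Quotient.mk P),
      Ideal.Quotient.eq_zero_iff_mem]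
    exact hI (Ideal.absNorm_mem I)
  exact Nat.le_of_dvd (Nat.pos_of_ne_zero (Ideal.absNorm_eq_zero_iff.not.mpr hI0)) hdvd

section NumberField

variable {K : Type} [Field K] [NumberField K]

theorem congMod_iff_reducesTo {I : Ideal (𝓞 K)} {x : K} {y : 𝓞 K} :
    CongMod K I x y ↔ ReducesTo I x (Ideal.Quotient.mk I y) := by
  simp only [CongMod, ReducesTo, map_mul]

theorem PrimeTo.exists_reducesTo {p : ℕ} {η : K} (hη : PrimeTo K p η) {𝔭 : Ideal (𝓞 K)}
    (hp : (p : 𝓞 K) ∈ 𝔭) : ∃ w : (𝓞 K ⧸ 𝔭)ˣ, ReducesTo 𝔭 η w := by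
  obtain ⟨a, b, ha, hb, hab⟩ := hη
  have hle : Ideal.span {(p : 𝓞 K)} ≤ 𝔭 := Ideal.span_singleton_le_iff_mem _ |>.mpr hp
  have ha' : IsUnit (Ideal.Quotient.mk 𝔭 a) := by simpa using ha.map (Ideal.Quotient.factor hle)
  have hb' : IsUnit (Ideal.Quotient.mk 𝔭 b) := by simpa using hb.map (Ideal.Quotient.factor hle)
  exact ⟨ha'.unit * hb'.unit⁻¹, a, b, hb', hab, by simp [mul_assoc]⟩

theorem IsFrob.reducesTo_apply {p : ℕ} {𝔭 : Ideal (𝓞 K)} {s : K ≃ₐ[ℚ] K}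
    (hs : IsFrob K p 𝔭 s) {x : K} {u : 𝓞 K ⧸ 𝔭} (hx : ReducesTo 𝔭 x u) :
    ReducesTo 𝔭 (s x) (u ^ p) := by
  obtain ⟨a, b, hb, hab, hu⟩ := hx
  have hmk (c : 𝓞 K) : Ideal.Quotient.mk 𝔭 (galRestrict ℤ ℚ K (𝓞 K) s c)
      = Ideal.Quotient.mk 𝔭 c ^ p := by
    rw [← map_pow]; exact Ideal.Quotient.eq.mpr (hs c)
  refine ⟨galRestrict ℤ ℚ K (𝓞 K) s a, galRestrict ℤ ℚ K (𝓞 K) s b, hmk b ▸ hb.pow p, ?_, ?_⟩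
  · rw [algebraMap_galRestrict_apply, algebraMap_galRestrict_apply, hab, map_mul]
  · rw [hmk, hmk, hu, mul_pow]

theorem IsFrob.reducesTo_pow_apply {p : ℕ} {𝔭 : Ideal (𝓞 K)} {s : K ≃ₐ[ℚ] K}
    (hs : IsFrob K p 𝔭 s) {x : K} {u : 𝓞 K ⧸ 𝔭} (hx : ReducesTo 𝔭 x u) (i : ℕ) :
    ReducesTo 𝔭 ((s ^ i) x) (u ^ p ^ i) := by
  induction i with
  | zero => simpa using hx
  | succ i ih => simpa [pow_succ', pow_mul'] using hs.reducesTo_apply ih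

theorem IsFrob.reducesTo_prod_zpow {p : ℕ} {𝔭 : Ideal (𝓞 K)} {s : K ≃ₐ[ℚ] K}
    (hs : IsFrob K p 𝔭 s) (h𝔭 : 𝔭 ≠ ⊤) {η : K} {w : (𝓞 K ⧸ 𝔭)ˣ} (hη : ReducesTo 𝔭 η w)
    (f : ℤ[X]) :
    ReducesTo 𝔭 (∏ i ∈ f.support, (s ^ i) η ^ f.coeff i) ↑(w ^ f.eval (p : ℤ)) := by
  have hterm (i : ℕ) (c : ℤ) : ReducesTo 𝔭 ((s ^ i) η ^ c) ↑(w ^ (c * (p : ℤ) ^ i)) := by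
    rw [mul_comm, zpow_mul, ← Nat.cast_pow, zpow_natCast]
    exact ReducesTo.zpow h𝔭 (w := w ^ p ^ i) (by simpa using hs.reducesTo_pow_apply hη i) c
  have hsum : w ^ f.eval (p : ℤ) = ∏ i ∈ f.support, w ^ (f.coeff i * (p : ℤ) ^ i) := by
    rw [eval_eq_sum, Polynomial.sum_def]
    induction f.support using Finset.cons_induction <;> simp [zpow_add, *]
  rw [hsum, Units.coe_prod]
  exact ReducesTo.prod _ fun i _ ↦ hterm i (f.coeff i)

theorem pow_torsionOrder_eq_one {ζ : 𝓞 K} {m : ℕ} (hm : 0 < m) (hζ : ζ ^ m = 1) :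
    ζ ^ Units.torsionOrder K = 1 := by
  let u := (IsUnit.of_pow_eq_one hζ hm.ne').unit
  have hu : u ∈ rootsOfUnity (Units.torsionOrder K) (𝓞 K) := by
    rw [Units.rootsOfUnity_eq_torsion, Units.torsion, CommGroup.mem_torsion,
      isOfFinOrder_iff_pow_eq_one]
    exact ⟨m, hm, Units.ext (by simpa [u] using hζ)⟩
  simpa [u] using congrArg Units.val ((mem_rootsOfUnity _ _).mp hu)

end NumberField

theorem statement_0_general
    (K : Type) [Field K] [NumberField K]
    (η : K) (hη0 : η ≠ 0)
    (hind : ∀ e : (K ≃ₐ[ℚ] K) → ℤ,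
      (∏ σ : K ≃ₐ[ℚ] K, σ η ^ e σ) = 1 → ∀ σ, e σ = 0)
    (s : K ≃ₐ[ℚ] K) (f : Polynomial ℤ)
    (hf : Polynomial.aeval (MonoidAlgebra.of ℤ (K ≃ₐ[ℚ] K) s) f ≠ 0) :
    ∃ B : ℕ, ∀ p : ℕ, p.Prime → B < p →
      Squarefree (Ideal.span {(p : 𝓞 K)}) →
      PrimeTo K p η →
      ∀ 𝔭 : Ideal (𝓞 K), 𝔭.IsPrime → (p : 𝓞 K) ∈ 𝔭 →
        IsFrob K p 𝔭 s →
        ∀ ζ : 𝓞 K, (∃ m : ℕ, 0 < m ∧ ζ ^ m = 1) →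
          ¬ CongMod K 𝔭 (η ^ (f.eval (p : ℤ))) ζ := by
  set α := ∏ i ∈ f.support, (s ^ i) η ^ f.coeff i
  obtain ⟨⟨g, d⟩, hgd⟩ :=
    IsLocalization.surj (nonZeroDivisors (𝓞 K)) (α ^ Units.torsionOrder K - 1)
  have hg0 : g ≠ 0 := by
    rintro rfl
    have : α ^ Units.torsionOrder K - 1 = 0 := by simpa [nonZeroDivisors.ne_zero d.2] using hgd
    exact prod_conj_zpow_pow_ne_one hη0 hind hf (Units.torsionOrder_ne_zero K)
      (sub_eq_zero.mp this)
  refine ⟨Ideal.absNorm (Ideal.span {g}),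
    fun p hp hpB _ hη 𝔭 h𝔭 hp𝔭 hs ζ ⟨m, hm, hζ⟩ hcong ↦ ?_⟩
  obtain ⟨w, hw⟩ := hη.exists_reducesTo hp𝔭
  have hα := hs.reducesTo_prod_zpow h𝔭.ne_top hw f
  have hwζ := (hw.zpow h𝔭.ne_top _).unique (congMod_iff_reducesTo.mp hcong)
  have hαM : ReducesTo 𝔭 (α ^ Units.torsionOrder K - 1) 0 := by
    rw [hwζ] at hα
    have := (hα.pow (Units.torsionOrder K)).sub ReducesTo.one
    rwa [← map_pow, pow_torsionOrder_eq_one hm hζ, map_one, sub_self] at this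
  have hg : g ∈ 𝔭 := hαM.mem_of_algebraMap_eq_mul hgd.symm
  exact hpB.not_ge <| hp.le_absNorm_of_le hp𝔭
    ((Ideal.span_singleton_le_iff_mem _).mpr hg) (by simpa using hg0)

/-- if `f(s) ≠ 0` in the group ring, then for all `p ≫ 0` of Frobenius `s` at `𝔭`,
`η^{f(p)} ≢ ζ (mod 𝔭)` for every root of unity `ζ` of `K`. -/
theorem statement_0
    (K : Type) [Field K] [NumberField K] [IsGalois ℚ K] (n : ℕ)
    (hn : Nat.card (K ≃ₐ[ℚ] K) = n)
    (η : K) (hη0 : η ≠ 0)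
    (hind : ∀ e : (K ≃ₐ[ℚ] K) → ℤ,
      (∏ σ : K ≃ₐ[ℚ] K, σ η ^ e σ) = 1 → ∀ σ, e σ = 0)
    (s : K ≃ₐ[ℚ] K) (f : Polynomial ℤ)
    (hf : Polynomial.aeval (MonoidAlgebra.of ℤ (K ≃ₐ[ℚ] K) s) f ≠ 0) :
    ∃ B : ℕ, ∀ p : ℕ, p.Prime → B < p →
      Squarefree (Ideal.span {(p : 𝓞 K)}) →
      PrimeTo K p η →
      ∀ 𝔭 : Ideal (𝓞 K), 𝔭.IsPrime → (p : 𝓞 K) ∈ 𝔭 →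
        IsFrob K p 𝔭 s →
        ∀ ζ : 𝓞 K, (∃ m : ℕ, 0 < m ∧ ζ ^ m = 1) →
          ¬ CongMod K 𝔭 (η ^ (f.eval (p : ℤ))) ζ :=
  statement_0_general K η hη0 hind s f hf
end

section
/- Let K = ℚ(√m) be a quadratic field and let η ∈ K^× be an element that is not a root of unity and satisfies N_{K/ℚ}(η) = ±1. Then there exists a bound B such that for every prime p > B that is inert in K/ℚ and prime to η, the order o_p(η) of η modulo p does not divide p − 1. -/
open NumberField Polynomial

/-!
At an inert prime `p` the residue field `𝓞 K / p` has `p²` elements, so the Frobenius at `p` is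
the nontrivial automorphism `s` of `K`, and `η^(p+1) ≡ η · s η = N(η) = ±1 (mod p)`. If moreover
`o_p(η) ∣ p - 1`, then `η^(p-1) ≡ 1`, hence `η² ≡ ±1` and `η⁴ ≡ 1 (mod p)`. Writing `η = θ / D`
with `θ` integral and `D ∈ ℤ`, the algebraic integer `θ⁴ - D⁴` is nonzero because `η` is not a
root of unity, and it is divisible by `p`; so `p ≤ |N(θ⁴ - D⁴)|`.
-/

theorem card_le_of_forall_pow_eq_self {F : Type*} [CommRing F] [IsDomain F] [Finite F] {p : ℕ}
    (hp : 1 < p) (h : ∀ x : F, x ^ p = x) : Nat.card F ≤ p := by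
  classical
  have := Fintype.ofFinite F
  have hdeg : (X ^ p - X : F[X]).natDegree = p := by
    rw [natDegree_sub_eq_left_of_natDegree_lt (by simpa using hp), natDegree_X_pow]
  have hne : (X ^ p - X : F[X]) ≠ 0 := by
    rintro h0
    rw [h0, natDegree_zero] at hdeg
    omega
  rw [Nat.card_eq_fintype_card, ← Finset.card_univ, ← hdeg]
  refine card_le_degree_of_subset_roots fun x _ => ?_
  simp [mem_roots hne, h x]

theorem pow_four_eq_of_mul_pow_eq {F : Type*} [CommRing F] [IsDomain F] {p k : ℕ} {t d ε : F}
    (hp : p ≠ 0) (hk : 0 < k) (hkp : k ∣ p - 1) (hd : d ^ p = d) (hε : ε ^ 2 = 1)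
    (htk : t ^ k = d ^ k) (htp : t * t ^ p = ε * d ^ 2) : t ^ 4 = d ^ 4 := by
  rcases eq_or_ne d 0 with rfl | hd0
  · rw [zero_pow hk.ne', pow_eq_zero_iff hk.ne'] at htk
    simp [htk]
  obtain ⟨m, hm⟩ := hkp
  have hd1 : d ^ (p - 1) = 1 := by
    apply mul_right_cancel₀ hd0
    rw [← pow_succ, Nat.sub_add_cancel (Nat.one_le_iff_ne_zero.mpr hp), hd, one_mul]
  have ht1 : t ^ (p - 1) = 1 := by rw [hm, pow_mul, htk, ← pow_mul, ← hm, hd1]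
  have ht2 : t ^ 2 = ε * d ^ 2 := by
    rw [← htp, ← pow_succ', show p + 1 = (p - 1) + 2 by omega, pow_add, ht1, one_mul]
  calc t ^ 4 = (t ^ 2) ^ 2 := by ring
    _ = ε ^ 2 * d ^ 4 := by rw [ht2]; ring
    _ = d ^ 4 := by rw [hε, one_mul]

theorem Algebra.norm_eq_mul_of_finrank_eq_two {F L : Type*} [Field F] [Field L] [Algebra F L]
    [IsGalois F L] (h : Module.finrank F L = 2) {s : Gal(L/F)} (hs : s ≠ 1) (x : L) :
    algebraMap F L (Algebra.norm F x) = x * s x := by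
  classical
  have : FiniteDimensional F L := Module.finite_of_finrank_eq_succ h
  have huniv : (Finset.univ : Finset Gal(L/F)) = {1, s} := by
    symm; apply Finset.eq_univ_of_card
    rw [Finset.card_pair hs.symm, ← h, ← IsGalois.card_aut_eq_finrank, Nat.card_eq_fintype_card]
  rw [Algebra.norm_eq_prod_automorphisms, huniv, Finset.prod_pair hs.symm]
  rfl

theorem exists_algebraMap_eq_intCast_mul {K : Type*} [Field K] [NumberField K] (x : K) :
    ∃ (θ : 𝓞 K) (D : ℤ), D ≠ 0 ∧ algebraMap (𝓞 K) K θ = D * x := by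
  obtain ⟨D, hD, hint⟩ := ((IsFractionRing.isAlgebraic_iff ℤ ℚ K).mpr
    (Algebra.IsAlgebraic.isAlgebraic x)).exists_integral_multiple
  exact ⟨⟨D • x, hint⟩, D, hD, zsmul_eq_mul x D⟩

theorem finite_quotient_of_natCast_mem {K : Type*} [Field K] [NumberField K] {p : ℕ}
    (hp : p ≠ 0) {Q : Ideal (𝓞 K)} (hpQ : (p : 𝓞 K) ∈ Q) : Finite (𝓞 K ⧸ Q) := by
  have hdvd := Ideal.absNorm_dvd_absNorm_of_le ((Ideal.span_singleton_le_iff_mem _).mpr hpQ)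
  rw [Ideal.absNorm_span_natCast] at hdvd
  exact (Ideal.absNorm_ne_zero_iff Q).mp (ne_zero_of_dvd_ne_zero (pow_ne_zero _ hp) hdvd)

theorem le_natAbs_norm_of_mem_span_natCast {K : Type*} [Field K] [NumberField K] {p : ℕ}
    {γ : 𝓞 K} (hγ : γ ≠ 0) (hmem : γ ∈ Ideal.span {(p : 𝓞 K)}) :
    p ≤ (Algebra.norm ℤ γ).natAbs := by
  have hdvd := Ideal.absNorm_dvd_absNorm_of_le ((Ideal.span_singleton_le_iff_mem _).mpr hmem)
  rw [Ideal.absNorm_span_natCast, Ideal.absNorm_span_singleton] at hdvd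
  calc p ≤ p ^ Module.finrank ℤ (𝓞 K) := Nat.le_self_pow Module.finrank_pos.ne' p
    _ ≤ _ := Nat.le_of_dvd (Int.natAbs_pos.mpr (Algebra.norm_ne_zero_iff.mpr hγ)) hdvd

theorem exists_isFrob (K : Type) [Field K] [NumberField K] [IsGalois ℚ K] {p : ℕ} (hp : p.Prime)
    (Q : Ideal (𝓞 K)) [Q.IsPrime] (hpQ : (p : 𝓞 K) ∈ Q) : ∃ s, IsFrob K p Q s := by
  let := IsIntegralClosure.MulSemiringAction ℤ ℚ K (𝓞 K)
  have := Algebra.isInvariant_of_isGalois ℤ ℚ K (𝓞 K)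
  have := finite_quotient_of_natCast_mem hp.ne_zero hpQ
  obtain ⟨s, hs⟩ := IsArithFrobAt.exists_of_isInvariant ℤ Gal(K/ℚ) Q
  have hunder : Q.under ℤ = Ideal.span {(p : ℤ)} := by
    have := Fact.mk hp
    refine (Ideal.IsMaximal.eq_of_le inferInstance Ideal.IsPrime.ne_top' ?_).symm
    rw [Ideal.span_singleton_le_iff_mem, Ideal.mem_comap, algebraMap_int_eq, map_natCast]
    exact hpQ
  refine ⟨s, fun x => ?_⟩
  have := hs x
  rwa [hunder, Int.card_ideal_quot] at this

theorem IsFrob.ne_one {K : Type} [Field K] [NumberField K] (hK : 1 < Module.finrank ℚ K)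
    {p : ℕ} (hp : p.Prime) [(Ideal.span {(p : 𝓞 K)}).IsPrime] {s : Gal(K/ℚ)}
    (h : IsFrob K p (Ideal.span {(p : 𝓞 K)}) s) : s ≠ 1 := by
  rintro rfl
  have := finite_quotient_of_natCast_mem hp.ne_zero (Ideal.mem_span_singleton_self (p : 𝓞 K))
  have hfix : ∀ x : 𝓞 K ⧸ Ideal.span {(p : 𝓞 K)}, x ^ p = x := by
    refine Ideal.Quotient.mk_surjective.forall.mpr fun x => ?_
    rw [← map_pow, Ideal.Quotient.eq]
    simpa using neg_mem (h x)
  have hcard := card_le_of_forall_pow_eq_self hp.one_lt hfix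
  rw [← Submodule.cardQuot_apply, ← Ideal.absNorm_apply, Ideal.absNorm_span_natCast,
    RingOfIntegers.rank] at hcard
  have := Nat.pow_le_pow_right hp.pos hK
  nlinarith [hp.two_le]

theorem CongMod.mk_eq {K : Type} [Field K] [NumberField K] {I : Ideal (𝓞 K)} {x : K} {y : 𝓞 K}
    (h : CongMod K I x y) {a c : 𝓞 K}
    (hac : algebraMap (𝓞 K) K a = algebraMap (𝓞 K) K c * x) :
    Ideal.Quotient.mk I a = Ideal.Quotient.mk I (y * c) := by
  obtain ⟨a', b', hb', ha'x, ha'y⟩ := h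
  have hab : a * b' = c * a' := FaithfulSMul.algebraMap_injective (𝓞 K) K <| by
    simp only [map_mul, hac, ha'x]; ring
  rw [← hb'.mul_left_inj, ← map_mul, hab, map_mul, ha'y, ← map_mul, ← map_mul]
  ring_nf

theorem pow_four_sub_pow_four_mem_of_dvd_sub_one {K : Type} [Field K] [NumberField K]
    (hquad : Module.finrank ℚ K = 2) {η : K} {θ : 𝓞 K} {D ε : ℤ}
    (hθ : algebraMap (𝓞 K) K θ = D * η) (hε : ε ^ 2 = 1) (hnorm : Algebra.norm ℚ η = ε)
    {p k : ℕ} (hp : p.Prime) [hQ : (Ideal.span {(p : 𝓞 K)}).IsPrime]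
    (hk : k ∈ OrderSet K (Ideal.span {(p : 𝓞 K)}) η) (hkp : k ∣ p - 1) :
    θ ^ 4 - (D : 𝓞 K) ^ 4 ∈ Ideal.span {(p : 𝓞 K)} := by
  have : Algebra.IsQuadraticExtension ℚ K := ⟨hquad⟩
  have := Fact.mk hp
  set Q := Ideal.span {(p : 𝓞 K)}
  have : CharP (𝓞 K ⧸ Q) p :=
    CharP.quotient _ p fun hu => hQ.ne_top (Ideal.span_singleton_eq_top.mpr hu)
  obtain ⟨s, hs⟩ := exists_isFrob K hp Q (Ideal.mem_span_singleton_self _)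
  have hθs : θ * galRestrict ℤ ℚ K (𝓞 K) s θ = ε * D ^ 2 := by
    apply FaithfulSMul.algebraMap_injective (𝓞 K) K
    have := Algebra.norm_eq_mul_of_finrank_eq_two hquad (hs.ne_one hquad.ge hp) η
    rw [hnorm, map_intCast] at this
    simp only [map_mul, algebraMap_galRestrict_apply, hθ, map_pow, map_intCast, this]
    ring
  have hD : Ideal.Quotient.mk Q D ^ p = Ideal.Quotient.mk Q D := by
    rw [map_intCast, ← frobenius_def, map_intCast]
  have hε' : (ε : 𝓞 K ⧸ Q) ^ 2 = 1 := by rw [← Int.cast_pow, hε, Int.cast_one]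
  have hθk : Ideal.Quotient.mk Q θ ^ k = Ideal.Quotient.mk Q D ^ k := by
    have := hk.2.mk_eq (a := θ ^ k) (c := D ^ k) (by simp only [map_pow, hθ, map_intCast]; ring)
    rwa [one_mul, map_pow, map_pow] at this
  have hθp :
      Ideal.Quotient.mk Q θ * Ideal.Quotient.mk Q θ ^ p = ε * Ideal.Quotient.mk Q D ^ 2 := by
    rw [← map_pow, ← Ideal.Quotient.eq.mpr (hs θ), ← map_mul, hθs]
    simp
  rw [← Ideal.Quotient.eq_zero_iff_mem, map_sub, map_pow, map_pow, sub_eq_zero]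
  exact pow_four_eq_of_mul_pow_eq hp.ne_zero hk.1 hkp hD hε' hθk hθp

theorem statement_8_general
    (K : Type) [Field K] [NumberField K]
    (hquad : Module.finrank ℚ K = 2)
    (η : K)
    (hηroot : ¬ ∃ m : ℕ, 0 < m ∧ η ^ m = 1)
    (hnorm : Algebra.norm ℚ η = 1 ∨ Algebra.norm ℚ η = -1) :
    ∃ B : ℕ, ∀ p : ℕ, p.Prime → B < p →
      (Ideal.span {(p : 𝓞 K)}).IsPrime →
      PrimeTo K p η →
      ∀ k : ℕ, IsLeast (OrderSet K (Ideal.span {(p : 𝓞 K)}) η) k → ¬ (k ∣ p - 1) := by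
  obtain ⟨θ, D, hD, hθ⟩ := exists_algebraMap_eq_intCast_mul η
  obtain ⟨ε, hε, hεη⟩ : ∃ ε : ℤ, ε ^ 2 = 1 ∧ Algebra.norm ℚ η = ε := by
    rcases hnorm with h | h
    exacts [⟨1, by norm_num, by simp [h]⟩, ⟨-1, by norm_num, by simp [h]⟩]
  have hγ : θ ^ 4 - (D : 𝓞 K) ^ 4 ≠ 0 := by
    intro h
    refine hηroot ⟨4, by norm_num, mul_left_cancel₀ (pow_ne_zero 4 (Int.cast_ne_zero.mpr hD)) ?_⟩
    have := congrArg (algebraMap (𝓞 K) K) h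
    simp only [map_sub, map_pow, hθ, map_intCast, map_zero, sub_eq_zero] at this
    linear_combination this
  refine ⟨(Algebra.norm ℤ (θ ^ 4 - (D : 𝓞 K) ^ 4)).natAbs, fun p hp hBp _ _ k hk hkp => ?_⟩
  exact hBp.not_ge <| le_natAbs_norm_of_mem_span_natCast hγ <|
    pow_four_sub_pow_four_mem_of_dvd_sub_one hquad hθ hε hεη hp hk.1 hkp

/-- in a quadratic field, if `η` is not a root of unity and has norm `±1`,
then for all inert `p ≫ 0` prime to `η`, the order `o_p(η)` does not divide `p - 1`. -/
theorem statement_8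
    (K : Type) [Field K] [NumberField K]
    (hquad : Module.finrank ℚ K = 2)
    (η : K) (hη0 : η ≠ 0)
    (hηroot : ¬ ∃ m : ℕ, 0 < m ∧ η ^ m = 1)
    (hnorm : Algebra.norm ℚ η = 1 ∨ Algebra.norm ℚ η = -1) :
    ∃ B : ℕ, ∀ p : ℕ, p.Prime → B < p →
      (Ideal.span {(p : 𝓞 K)}).IsPrime →
      PrimeTo K p η →
      ∀ k : ℕ, IsLeast (OrderSet K (Ideal.span {(p : 𝓞 K)}) η) k → ¬ (k ∣ p - 1) :=
  statement_8_general K hquad η hηroot hnorm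
end

section
/- Let K be a number field, and let η ∈ Z_K be an algebraic integer that is not a root of unity. Let p be a prime number prime to η. If k ≥ 1 is an integer and ζ ∈ μ(K) is a root of unity such that η^k ≡ ζ (mod p Z_K), then k ≥ log(p − 1)/log(c₀(η)). -/
/-! The integer `x = η^k - ζ` is nonzero because `η` is not a root of unity, and it is divisible
by `p`, so `p^[K:ℚ]` divides its norm. The norm is at most `house(x)^[K:ℚ]`, hence
`p ≤ house(x) ≤ c₀(η)^k + 1`, and taking logarithms gives the bound on `k`. -/

open NumberField Polynomial

/-- `c₀(η)`: the maximum of the absolute values of the complex conjugates of `η`. -/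
noncomputable def c0 (K : Type) [Field K] [NumberField K] (η : K) : ℝ :=
  ⨆ σ : K →+* ℂ, ‖σ η‖


namespace NumberField

lemma c0_eq_house {K : Type} [Field K] [NumberField K] (x : K) : c0 K x = house x := by
  refine le_antisymm (ciSup_le fun σ => norm_embedding_le_house x σ) ?_
  refine (pi_norm_le_iff_of_nonneg (Real.iSup_nonneg fun σ => norm_nonneg _)).mpr fun σ => ?_
  exact le_ciSup (f := fun σ : K →+* ℂ => ‖σ x‖) (Set.finite_range _).bddAbove σ

variable {K : Type*} [Field K] [NumberField K]

lemma house_sub_le (α β : K) : house (α - β) ≤ house α + house β := by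
  simp only [house, map_sub]
  exact norm_sub_le _ _

lemma house_eq_one_of_pow_eq_one {ζ : K} {m : ℕ} (hζ : ζ ^ m = 1) (hm : m ≠ 0) :
    house ζ = 1 := by
  have h : ∀ σ : K →+* ℂ, ‖σ ζ‖₊ = 1 := fun σ =>
    NNReal.coe_eq_one.mp (Complex.norm_eq_one_of_pow_eq_one (by rw [← map_pow, hζ, map_one]) hm)
  simp [house_eq_sup', h]

lemma norm_algebraNorm_le_house_pow (x : K) :
    ‖Algebra.norm ℚ x‖ ≤ house x ^ Module.finrank ℚ K := by
  obtain ⟨σ⟩ := (inferInstance : Nonempty (K →+* ℂ))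
  calc ‖Algebra.norm ℚ x‖ ≤ ‖σ x‖ * house x ^ (Module.finrank ℚ K - 1) :=
        norm_norm_le_norm_mul_house_pow x σ
    _ ≤ house x * house x ^ (Module.finrank ℚ K - 1) :=
        mul_le_mul_of_nonneg_right (norm_embedding_le_house x σ) (pow_nonneg (house_nonneg x) _)
    _ = house x ^ Module.finrank ℚ K := by
        rw [← pow_succ', Nat.sub_add_cancel Module.finrank_pos]

theorem natCast_le_house_of_mem_span {x : 𝓞 K} (hx0 : x ≠ 0) {n : ℕ}
    (hx : x ∈ Ideal.span {(n : 𝓞 K)}) : (n : ℝ) ≤ house (x : K) := by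
  have hdvd : ((n ^ Module.finrank ℚ K : ℕ) : ℤ) ∣ Algebra.norm ℤ x := by
    have := Ideal.absNorm_dvd_norm_of_mem hx
    rwa [Ideal.absNorm_span_natCast, RingOfIntegers.rank] at this
  have hN0 : Algebra.norm ℤ x ≠ 0 := Algebra.norm_ne_zero_iff.mpr hx0
  have hle : (n : ℝ) ^ Module.finrank ℚ K ≤ house (x : K) ^ Module.finrank ℚ K := calc
    (n : ℝ) ^ Module.finrank ℚ K ≤ |(Algebra.norm ℤ x : ℝ)| := by
        exact_mod_cast Int.le_of_dvd (abs_pos.mpr hN0) ((dvd_abs _ _).mpr hdvd)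
    _ = ‖Algebra.norm ℚ (x : K)‖ := by rw [← Algebra.coe_norm_int, Int.norm_cast_rat, Int.norm_eq_abs]
    _ ≤ house (x : K) ^ Module.finrank ℚ K := norm_algebraNorm_le_house_pow _
  exact (pow_le_pow_iff_left₀ (by positivity) (house_nonneg _) Module.finrank_pos.ne').mp hle

end NumberField

lemma Real.log_div_log_le_of_le_pow {a c : ℝ} {k : ℕ} (ha : 1 ≤ a) (h : a ≤ c ^ k) :
    Real.log a / Real.log c ≤ k := by
  rcases le_or_gt (Real.log c) 0 with hc | hc
  · exact (div_nonpos_of_nonneg_of_nonpos (Real.log_nonneg ha) hc).trans k.cast_nonneg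
  · rw [div_le_iff₀ hc, ← Real.log_pow]
    exact Real.log_le_log (by linarith) h

theorem statement_11_general
    (K : Type) [Field K] [NumberField K]
    (η : 𝓞 K) (hηroot : ¬ ∃ m : ℕ, 0 < m ∧ η ^ m = 1)
    (p : ℕ) (hp : p.Prime)
    (k : ℕ) (hk : 1 ≤ k)
    (ζ : 𝓞 K) (hζ : ∃ m : ℕ, 0 < m ∧ ζ ^ m = 1)
    (hcong : η ^ k - ζ ∈ Ideal.span {(p : 𝓞 K)}) :
    Real.log ((p : ℝ) - 1) / Real.log (c0 K (algebraMap (𝓞 K) K η)) ≤ k := by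
  obtain ⟨m, hm, hζm⟩ := hζ
  have hx0 : η ^ k - ζ ≠ 0 := fun h => hηroot
    ⟨k * m, by positivity, by rw [pow_mul, sub_eq_zero.mp h, hζm]⟩
  have hp_le : (p : ℝ) ≤ house (η : K) ^ k + 1 := calc
    (p : ℝ) ≤ house ((η ^ k - ζ : 𝓞 K) : K) := natCast_le_house_of_mem_span hx0 hcong
    _ ≤ house ((η : K) ^ k) + house (ζ : K) := by push_cast; exact house_sub_le _ _
    _ ≤ house (η : K) ^ k + 1 := by
        rw [house_eq_one_of_pow_eq_one (ζ := (ζ : K)) (by exact_mod_cast hζm) hm.ne']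
        exact add_le_add_left (house_pow_le _ _) 1
  have hp2 : (2 : ℝ) ≤ p := by exact_mod_cast hp.two_le
  rw [c0_eq_house]
  exact Real.log_div_log_le_of_le_pow (by linarith) (by linarith)

/-- if `η ∈ Z_K` is not a root of unity and `η^k ≡ ζ (mod p Z_K)` with
`k ≥ 1` and `ζ ∈ μ(K)`, then `k ≥ log(p-1)/log(c₀(η))`. -/
theorem statement_11
    (K : Type) [Field K] [NumberField K]
    (η : 𝓞 K) (hηroot : ¬ ∃ m : ℕ, 0 < m ∧ η ^ m = 1)
    (p : ℕ) (hp : p.Prime)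
    (hpη : IsUnit (Ideal.Quotient.mk (Ideal.span {(p : 𝓞 K)}) η))
    (k : ℕ) (hk : 1 ≤ k)
    (ζ : 𝓞 K) (hζ : ∃ m : ℕ, 0 < m ∧ ζ ^ m = 1)
    (hcong : η ^ k - ζ ∈ Ideal.span {(p : 𝓞 K)}) :
    Real.log ((p : ℝ) - 1) / Real.log (c0 K (algebraMap (𝓞 K) K η)) ≤ k :=
  statement_11_general K η hηroot p hp k hk ζ hζ hcong
end

section
/- Let K be a quadratic field with nontrivial automorphism s, and let η ∈ K^× be such that η and s(η) are multiplicatively independent (η^a·s(η)^b = 1 with integers a, b implies a = b = 0). Then there exists a bound B such that for every prime p > B that is inert in K/ℚ and prime to η, the order o_p(η) of η modulo p divides p² − 1 but divides neither p − 1 nor p + 1. -/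
open NumberField Polynomial

lemma frob_fixed_eq_cast {F : Type*} [Field F] {p : ℕ} (hp : p.Prime)
    [CharP F p] {y : F} (hy : y ^ p = y) : ∃ z : ZMod p, ZMod.castHom dvd_rfl F z = y := by
  haveI : Fact p.Prime := ⟨hp⟩
  classical
  set φ : ZMod p →+* F := ZMod.castHom dvd_rfl F with hφ
  have hinj : Function.Injective φ := φ.injective
  set f : F[X] := X ^ p - X with hf
  have hf0 : f ≠ 0 := FiniteField.X_pow_card_sub_X_ne_zero F hp.one_lt
  have hdeg : f.natDegree = p := FiniteField.X_pow_card_sub_X_natDegree_eq F hp.one_lt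
  have hroot : ∀ z : ZMod p, φ z ∈ f.roots := by
    intro z
    rw [Polynomial.mem_roots hf0]
    simp only [f, Polynomial.IsRoot, eval_sub, eval_pow, eval_X, ← map_pow, ZMod.pow_card,
      sub_self]
  have hyroot : y ∈ f.roots := by
    rw [Polynomial.mem_roots hf0]
    simp only [f, Polynomial.IsRoot, eval_sub, eval_pow, eval_X, hy, sub_self]
  set T : Finset F := Finset.univ.image φ with hT
  have hTsub : T ⊆ f.roots.toFinset := by
    intro x hx
    simp only [hT, Finset.mem_image] at hx
    obtain ⟨z, _, rfl⟩ := hx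
    exact Multiset.mem_toFinset.2 (hroot z)
  have hTcard : T.card = p := by
    rw [hT, Finset.card_image_of_injective _ hinj, Finset.card_univ, ZMod.card]
  have hle : f.roots.toFinset.card ≤ p :=
    le_trans (Multiset.toFinset_card_le _) (le_trans (Polynomial.card_roots' f) hdeg.le)
  have hTeq : T = f.roots.toFinset :=
    Finset.eq_of_subset_of_card_le hTsub (by rw [hTcard]; exact hle)
  have : y ∈ T := by rw [hTeq]; exact Multiset.mem_toFinset.2 hyroot
  simp only [hT, Finset.mem_image] at this
  obtain ⟨z, _, hz⟩ := this
  exact ⟨z, hz⟩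

lemma ringHom_fixed_of_frob_fixed {F : Type*} [Field F] {p : ℕ} (hp : p.Prime)
    [CharP F p] (σ : F →+* F) {y : F} (hy : y ^ p = y) : σ y = y := by
  obtain ⟨z, rfl⟩ := frob_fixed_eq_cast hp hy
  exact RingHom.congr_fun
    (RingHom.ext_zmod (σ.comp (ZMod.castHom dvd_rfl F)) (ZMod.castHom dvd_rfl F)) z

lemma ringHom_apply_eq_or {F : Type*} [Field F] [Fintype F] {p : ℕ} (hp : p.Prime)
    [CharP F p] (hcard : Fintype.card F = p ^ 2) (σ : F →+* F) (x : F) :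
    σ x = x ∨ σ x = x ^ p := by
  haveI : Fact p.Prime := ⟨hp⟩
  have hx2 : x ^ p ^ 2 = x := by rw [← hcard, FiniteField.pow_card]
  have h1 : (x + x ^ p) ^ p = x + x ^ p := by
    rw [add_pow_char, ← pow_mul, ← pow_two, hx2, add_comm]
  have h2 : (x ^ (p + 1)) ^ p = x ^ (p + 1) := by
    rw [← pow_mul, add_mul, one_mul, ← pow_two, pow_add, hx2, ← pow_succ']
  have e1 : σ (x + x ^ p) = x + x ^ p := ringHom_fixed_of_frob_fixed hp σ h1
  have e2 : σ (x ^ (p + 1)) = x ^ (p + 1) := ringHom_fixed_of_frob_fixed hp σ h2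
  have key : (σ x - x) * (σ x - x ^ p) = 0 := by
    have h3 : (σ x - x) * (σ x - x ^ p)
        = σ (x * x) - σ x * σ (x + x ^ p) + σ (x ^ (p + 1)) := by
      rw [map_mul, e1, e2]
      ring
    rw [h3, ← map_mul, ← map_sub, ← map_add]
    have h4 : x * x - x * (x + x ^ p) + x ^ (p + 1) = 0 := by ring
    rw [h4, map_zero]
  rcases mul_eq_zero.1 key with h | h
  · exact Or.inl (sub_eq_zero.1 h)
  · exact Or.inr (sub_eq_zero.1 h)


set_option maxHeartbeats 1000000 in
set_option synthInstance.maxHeartbeats 400000 in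
/-- in a quadratic field, if `η` and `s(η)` are multiplicatively independent,
then for all inert `p ≫ 0` prime to `η`, `o_p(η)` divides `p² - 1` but divides
neither `p - 1` nor `p + 1`. -/
theorem statement_18
    (K : Type) [Field K] [NumberField K]
    (hquad : Module.finrank ℚ K = 2)
    (s : K ≃ₐ[ℚ] K) (hs : s ≠ 1)
    (η : K) (hη0 : η ≠ 0)
    (hind : ∀ a b : ℤ, η ^ a * (s η) ^ b = 1 → a = 0 ∧ b = 0) :
    ∃ B : ℕ, ∀ p : ℕ, p.Prime → B < p →
      (Ideal.span {(p : 𝓞 K)}).IsPrime →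
      PrimeTo K p η →
      ∀ k : ℕ, IsLeast (OrderSet K (Ideal.span {(p : 𝓞 K)}) η) k →
        k ∣ p ^ 2 - 1 ∧ ¬ (k ∣ p - 1) ∧ ¬ (k ∣ p + 1) := by
  classical
  have hinj : Function.Injective (algebraMap (𝓞 K) K) := IsFractionRing.injective _ _
  obtain ⟨a₀, b₀, hb₀mem, hη⟩ := IsFractionRing.div_surjective (A := 𝓞 K) η
  have hb₀ : b₀ ≠ 0 := nonZeroDivisors.ne_zero hb₀mem
  have hB₀ : algebraMap (𝓞 K) K b₀ ≠ 0 := (map_ne_zero_iff _ hinj).2 hb₀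
  have hA₀ : algebraMap (𝓞 K) K a₀ = η * algebraMap (𝓞 K) K b₀ := by
    rw [← hη]; exact (div_mul_cancel₀ _ hB₀).symm
  set gA : 𝓞 K ≃ₐ[ℤ] 𝓞 K := galRestrict ℤ ℚ K (𝓞 K) s with hgA
  have hgmap : ∀ x : 𝓞 K, algebraMap (𝓞 K) K (gA x) = s (algebraMap (𝓞 K) K x) :=
    fun x => algebraMap_galRestrict_apply ℤ s x
  have hsη0 : s η ≠ 0 := fun h => hη0 (by have := congrArg s.symm h; simpa using this)
  have hsB₀ : s (algebraMap (𝓞 K) K b₀) ≠ 0 :=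
    fun h => hB₀ (by have := congrArg s.symm h; simpa using this)
  have hsη : s η ≠ η := by
    intro h
    have h1 : η ^ (1 : ℤ) * (s η) ^ (-1 : ℤ) = 1 := by
      rw [h, zpow_one, zpow_neg, zpow_one]
      exact mul_inv_cancel₀ hη0
    exact absurd (hind 1 (-1) h1).1 one_ne_zero
  have hmul : η * s η ≠ 1 := by
    intro h
    have h1 : η ^ (1 : ℤ) * (s η) ^ (1 : ℤ) = 1 := by rw [zpow_one, zpow_one]; exact h
    exact absurd (hind 1 1 h1).1 one_ne_zero
  set w₀ : 𝓞 K := gA a₀ * b₀ - a₀ * gA b₀ with hw₀def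
  set w₁ : 𝓞 K := a₀ * gA a₀ - b₀ * gA b₀ with hw₁def
  have hw₀ : w₀ ≠ 0 := by
    intro h
    have h0 : algebraMap (𝓞 K) K w₀ = 0 := by rw [h, map_zero]
    rw [hw₀def, map_sub, map_mul, map_mul, hgmap, hgmap, hA₀, map_mul] at h0
    have h2 : (s η - η) * (algebraMap (𝓞 K) K b₀ * s (algebraMap (𝓞 K) K b₀)) = 0 := by
      rw [← h0]; ring
    rcases mul_eq_zero.1 h2 with h3 | h3
    · exact hsη (sub_eq_zero.1 h3)
    · rcases mul_eq_zero.1 h3 with h4 | h4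
      · exact hB₀ h4
      · exact hsB₀ h4
  have hw₁ : w₁ ≠ 0 := by
    intro h
    have h0 : algebraMap (𝓞 K) K w₁ = 0 := by rw [h, map_zero]
    rw [hw₁def, map_sub, map_mul, map_mul, hgmap, hgmap, hA₀, map_mul] at h0
    have h2 : (η * s η - 1) * (algebraMap (𝓞 K) K b₀ * s (algebraMap (𝓞 K) K b₀)) = 0 := by
      rw [← h0]; ring
    rcases mul_eq_zero.1 h2 with h3 | h3
    · exact hmul (sub_eq_zero.1 h3)
    · rcases mul_eq_zero.1 h3 with h4 | h4
      · exact hB₀ h4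
      · exact hsB₀ h4
  have hn₀ : Algebra.norm ℤ w₀ ≠ 0 := Algebra.norm_ne_zero_iff.2 hw₀
  have hn₁ : Algebra.norm ℤ w₁ ≠ 0 := Algebra.norm_ne_zero_iff.2 hw₁
  have hrank : Module.finrank ℤ (𝓞 K) = 2 := by rw [RingOfIntegers.rank]; exact hquad
  have hnormp : ∀ q : ℕ, Algebra.norm ℤ ((q : 𝓞 K)) = (q : ℤ) ^ 2 := by
    intro q
    have h1 : ((q : ℕ) : 𝓞 K) = algebraMap ℤ (𝓞 K) ((q : ℕ) : ℤ) := by simp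
    rw [h1, Algebra.norm_algebraMap_of_basis (Module.Free.chooseBasis ℤ (𝓞 K)),
      ← Module.finrank_eq_card_chooseBasisIndex, hrank]
  refine ⟨max (Algebra.norm ℤ w₀).natAbs (Algebra.norm ℤ w₁).natAbs, ?_⟩
  intro p hp hpB hP hPT k hk
  set I : Ideal (𝓞 K) := Ideal.span {((p : ℕ) : 𝓞 K)} with hI
  have hpne : ((p : ℕ) : 𝓞 K) ≠ 0 := Nat.cast_ne_zero.2 hp.ne_zero
  have hIbot : I ≠ ⊥ := by
    rw [hI, Ne, Ideal.span_singleton_eq_bot]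
    exact hpne
  haveI hImax : I.IsMaximal := hP.isMaximal hIbot
  letI : Field (𝓞 K ⧸ I) := Ideal.Quotient.field I
  have hNcard : Nat.card (𝓞 K ⧸ I) = p ^ 2 := by
    rw [← Submodule.cardQuot_apply, ← Ideal.absNorm_apply, hI, Ideal.absNorm_span_singleton,
      hnormp p]
    simp [Int.natAbs_pow]
  haveI : Finite (𝓞 K ⧸ I) := Nat.finite_of_card_ne_zero (by rw [hNcard]; exact pow_ne_zero 2 hp.ne_zero)
  letI : Fintype (𝓞 K ⧸ I) := Fintype.ofFinite _
  have hcard : Fintype.card (𝓞 K ⧸ I) = p ^ 2 := by rw [← Nat.card_eq_fintype_card, hNcard]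
  have hpF : ((p : ℕ) : 𝓞 K ⧸ I) = 0 := by
    rw [← map_natCast (Ideal.Quotient.mk I)]
    exact Ideal.Quotient.eq_zero_iff_mem.2 (Ideal.mem_span_singleton_self _)
  haveI : CharP (𝓞 K ⧸ I) p := (CharP.charP_iff_prime_eq_zero hp).2 hpF
  -- the induced map on the quotient
  have hle : I ≤ I.comap (gA.toAlgHom.toRingHom) := by
    intro x hx
    rw [Ideal.mem_comap]
    rw [hI, Ideal.mem_span_singleton] at hx ⊢
    obtain ⟨y, rfl⟩ := hx
    exact ⟨gA y, by simp [map_mul]⟩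
  set σ : (𝓞 K ⧸ I) →+* (𝓞 K ⧸ I) := Ideal.quotientMap I (gA.toAlgHom.toRingHom) hle with hσ
  have hσmk : ∀ x : 𝓞 K, σ (Ideal.Quotient.mk I x) = Ideal.Quotient.mk I (gA x) :=
    fun x => Ideal.quotientMap_mk
  -- the contradiction-from-smallness machine
  have hsmall : ∀ w : 𝓞 K, Algebra.norm ℤ w ≠ 0 →
      (Algebra.norm ℤ w).natAbs ≤ max (Algebra.norm ℤ w₀).natAbs (Algebra.norm ℤ w₁).natAbs →
      Ideal.Quotient.mk I w ≠ 0 := by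
    intro w hnw hwB h0
    have hd : ((p : ℕ) : 𝓞 K) ∣ w := by
      rw [← Ideal.mem_span_singleton, ← hI]
      exact Ideal.Quotient.eq_zero_iff_mem.1 h0
    have hnd : Algebra.norm ℤ ((p : 𝓞 K)) ∣ Algebra.norm ℤ w := map_dvd _ hd
    rw [hnormp p] at hnd
    have hpd : ((p : ℕ) : ℤ) ∣ Algebra.norm ℤ w := dvd_trans (dvd_pow_self _ two_ne_zero) hnd
    have hnat : p ∣ (Algebra.norm ℤ w).natAbs := by
      have := Int.natAbs_dvd_natAbs.2 hpd
      simpa using this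
    have hple : p ≤ (Algebra.norm ℤ w).natAbs :=
      Nat.le_of_dvd (Int.natAbs_pos.2 hnw) hnat
    omega
  have hmk₀ : Ideal.Quotient.mk I w₀ ≠ 0 := hsmall w₀ hn₀ (le_max_left _ _)
  have hmk₁ : Ideal.Quotient.mk I w₁ ≠ 0 := hsmall w₁ hn₁ (le_max_right _ _)
  obtain ⟨a, b, hua, hub, hab⟩ := hPT
  set Q : 𝓞 K →+* 𝓞 K ⧸ I := Ideal.Quotient.mk I with hQ
  have hbne : Q b ≠ 0 := hub.ne_zero
  have hane : Q a ≠ 0 := hua.ne_zero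
  have hgbne : Q (gA b) ≠ 0 := by
    rw [← hσmk b]
    exact (hub.map σ).ne_zero
  set u : 𝓞 K ⧸ I := Q a / Q b with hu
  have hu0 : u ≠ 0 := div_ne_zero hane hbne
  have hpow : ∀ m : ℕ, (u ^ m = 1 ↔ Q (a ^ m) = Q (b ^ m)) := by
    intro m
    rw [hu, div_pow, div_eq_one_iff_eq (pow_ne_zero m hbne), map_pow, map_pow]
  have habm : ∀ m : ℕ, algebraMap (𝓞 K) K (a ^ m) = η ^ m * algebraMap (𝓞 K) K (b ^ m) := by
    intro m
    rw [map_pow, map_pow, hab, mul_pow]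
  have hcong : ∀ m : ℕ, CongMod K I (η ^ m) 1 ↔ u ^ m = 1 := by
    intro m
    rw [hpow m]
    constructor
    · rintro ⟨c, d, hd, h1, h2⟩
      rw [one_mul] at h2
      have hcb : c * b ^ m = a ^ m * d := hinj (by rw [map_mul, map_mul, h1, habm m]; ring)
      have h3 := congrArg Q hcb
      rw [map_mul, map_mul, h2] at h3
      have h4 : Q (a ^ m) * Q d = Q (b ^ m) * Q d := by rw [← h3]; ring
      exact mul_right_cancel₀ hd.ne_zero h4
    · intro h
      refine ⟨a ^ m, b ^ m, ?_, habm m, ?_⟩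
      · rw [map_pow]; exact hub.pow m
      · rw [one_mul]; exact h
  obtain ⟨⟨hkpos, hkc⟩, hkleast⟩ := hk
  have hku : u ^ k = 1 := (hcong k).1 hkc
  have hou : 0 < orderOf u := by
    obtain ⟨u', hu'⟩ := hu0.isUnit
    rw [← hu', orderOf_units]
    exact orderOf_pos u'
  have hkord : k = orderOf u :=
    le_antisymm
      (hkleast ⟨hou, (hcong _).2 (pow_orderOf_eq_one u)⟩)
      (Nat.le_of_dvd hkpos (orderOf_dvd_of_pow_eq_one hku))
  -- σ u ≠ u
  have hcross : a * b₀ = a₀ * b := hinj (by rw [map_mul, map_mul, hab, hA₀]; ring)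
  have hE1 : Q a * Q b₀ = Q a₀ * Q b := by rw [← map_mul, ← map_mul, hcross]
  have hE2 : Q (gA a) * Q (gA b₀) = Q (gA a₀) * Q (gA b) := by
    have h := congrArg (fun x => Q (gA x)) hcross
    simpa only [map_mul] using h
  have hσu : σ u = Q (gA a) / Q (gA b) := by
    rw [hu, map_div₀, hσmk, hσmk]
  have hσuneq : σ u ≠ u := by
    intro hequ
    apply hmk₀
    rw [hσu, hu, div_eq_div_iff hgbne hbne] at hequ
    -- hequ : Q (gA a) * Q b = Q a * Q (gA b)
    have hgoal : Q (gA a₀) * Q b₀ = Q a₀ * Q (gA b₀) := by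
      have ht : Q a * Q (gA b) ≠ 0 := mul_ne_zero hane hgbne
      apply mul_right_cancel₀ ht
      linear_combination (Q (gA a₀) * Q (gA b)) * hE1 - (Q a₀ * Q b) * hE2 +
        (Q a₀ * Q (gA b₀)) * hequ
    rw [hw₀def, map_sub, map_mul, map_mul, hgoal, sub_self]
  refine ⟨?_, ?_, ?_⟩
  · -- k ∣ p ^ 2 - 1
    have hcard1 : u ^ (p ^ 2 - 1) = 1 := by
      rw [← hcard]
      exact FiniteField.pow_card_sub_one_eq_one u hu0
    rw [hkord]
    exact orderOf_dvd_of_pow_eq_one hcard1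
  · -- ¬ k ∣ p - 1
    intro hdvd
    obtain ⟨c, hc⟩ := hdvd
    have hup : u ^ (p - 1) = 1 := by rw [hc, pow_mul, hku, one_pow]
    have hupp : u ^ p = u := by
      have hpp : p - 1 + 1 = p := Nat.succ_pred_eq_of_pos hp.pos
      calc u ^ p = u ^ (p - 1 + 1) := by rw [hpp]
        _ = u ^ (p - 1) * u := pow_succ u (p - 1)
        _ = u := by rw [hup, one_mul]
    exact hσuneq (ringHom_fixed_of_frob_fixed hp σ hupp)
  · -- ¬ k ∣ p + 1
    intro hdvd
    obtain ⟨c, hc⟩ := hdvd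
    have hup1 : u ^ (p + 1) = 1 := by rw [hc, pow_mul, hku, one_pow]
    have hσup : σ u = u ^ p := (ringHom_apply_eq_or hp hcard σ u).resolve_left hσuneq
    have hmu : σ u * u = 1 := by rw [hσup, ← pow_succ, hup1]
    rw [hσu, hu, div_mul_div_comm, div_eq_one_iff_eq (mul_ne_zero hgbne hbne)] at hmu
    -- hmu : Q (gA a) * Q a = Q (gA b) * Q b
    apply hmk₁
    have hgoal : Q a₀ * Q (gA a₀) = Q b₀ * Q (gA b₀) := by
      have ht : Q b * Q (gA b) ≠ 0 := mul_ne_zero hbne hgbne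
      apply mul_right_cancel₀ ht
      linear_combination (-(Q (gA a₀) * Q (gA b))) * hE1 - (Q a * Q b₀) * hE2 +
        (Q (gA b₀) * Q b₀) * hmu
    rw [hw₁def, map_sub, map_mul, map_mul, hgoal, sub_self]
end
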